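/- Inversion for λ•→: (1) if Γ ⊢ k : t then t = •ⁿt' for some n and some t' with k:t' ∈ κ; (2) if Γ ⊢ x : t then t = •ⁿt' for some n and some t' with x:t' ∈ Γ; (3) if Γ ⊢ λx.e : t then t = •ⁿ(t₁→t₂) for some n, t₁, t₂, and Γ, x:•ⁿt₁ ⊢ e : •ⁿt₂; (4) if Γ ⊢ e₁e₂ : t then t = •ⁿt₂ for some n, t₁, t₂ with Γ ⊢ e₂ : •ⁿt₁ and Γ ⊢ e₁ : •ⁿ(t₁→t₂). -/

import Mathlib

namespace LambdaBullet

/-- Head constructors for pseudo-types. -/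
inductive TyHead : Type
  | var (n : ℕ)
  | nat
  | prod
  | arrow
  | bullet

/-- Arity of each pseudo-type constructor. -/
def tyArity : TyHead → Type
  | .var _ => Empty
  | .nat => Empty
  | .prod => Bool
  | .arrow => Bool
  | .bullet => Unit

/-- The polynomial functor whose M-type is the type of pseudo-types. -/
def TyP : PFunctor := ⟨TyHead, tyArity⟩

/-- Pseudo-types: possibly infinite coinductively generated trees. -/
abbrev PseudoType := TyP.M

/-- Type variable. -/
def tvar (n : ℕ) : PseudoType := PFunctor.M.mk ⟨TyHead.var n, Empty.elim⟩
/-- The type `Nat`. -/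
def tnat : PseudoType := PFunctor.M.mk ⟨TyHead.nat, Empty.elim⟩
/-- Product type. -/
def tprod (t s : PseudoType) : PseudoType :=
  PFunctor.M.mk ⟨TyHead.prod, fun b => bif b then s else t⟩
/-- Arrow type. -/
def tarrow (t s : PseudoType) : PseudoType :=
  PFunctor.M.mk ⟨TyHead.arrow, fun b => bif b then s else t⟩
/-- Delay type `•t`. -/
def tbullet (t : PseudoType) : PseudoType :=
  PFunctor.M.mk ⟨TyHead.bullet, fun _ => t⟩
/-- Iterated delay `•ⁿ t`. -/
def tbulletN (n : ℕ) (t : PseudoType) : PseudoType := tbullet^[n] t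

/-- `Child t s` holds iff `s` is an immediate subtree of `t`. -/
def Child (t s : PseudoType) : Prop := ∃ b : TyP.B t.dest.1, t.dest.2 b = s

/-- `Subtree t s` holds iff `s` is a subtree of `t`. -/
def Subtree (t s : PseudoType) : Prop := Relation.ReflTransGen Child t s

/-- A pseudo-type is regular if it has finitely many distinct subtrees. -/
def Regular (t : PseudoType) : Prop := {s | Subtree t s}.Finite

/-- The root of the tree is a `•`. -/
def headIsBullet (t : PseudoType) : Prop := t.dest.1 = TyHead.bullet

/-- A pseudo-type is guarded if every infinite path in its tree has
infinitely many `•`'s. -/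
def Guarded (t : PseudoType) : Prop :=
  ∀ f : ℕ → PseudoType, f 0 = t → (∀ n, Child (f n) (f (n + 1))) →
    ∀ N, ∃ n, N ≤ n ∧ headIsBullet (f n)

/-- A type is a regular and guarded pseudo-type. -/
def IsType (t : PseudoType) : Prop := Regular t ∧ Guarded t

/-- `•^∞`: the unique pseudo-type satisfying `•^∞ = • •^∞`. -/
def binf : PseudoType := PFunctor.M.corec (fun _ : Unit => ⟨TyHead.bullet, fun _ => ()⟩) ()

/-- Constants. -/
inductive Const : Type
  | pair
  | cfst
  | csnd
  | zero
  | succ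

/-- Expressions (with de Bruijn indices for variables). -/
inductive Expr : Type
  | var (x : ℕ)
  | const (k : Const)
  | lam (e : Expr)
  | app (e₁ e₂ : Expr)

def liftRen (f : ℕ → ℕ) : ℕ → ℕ
  | 0 => 0
  | n + 1 => f n + 1

def rename (f : ℕ → ℕ) : Expr → Expr
  | .var n => .var (f n)
  | .const k => .const k
  | .lam e => .lam (rename (liftRen f) e)
  | .app a b => .app (rename f a) (rename f b)

def liftSub (ρ : ℕ → Expr) : ℕ → Expr
  | 0 => .var 0
  | n + 1 => rename Nat.succ (ρ n)

/-- Simultaneous (capture-avoiding) substitution. -/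
def substE (ρ : ℕ → Expr) : Expr → Expr
  | .var n => ρ n
  | .const k => .const k
  | .lam e => .lam (substE (liftSub ρ) e)
  | .app a b => .app (substE ρ a) (substE ρ b)

/-- `subst0 e f` is `e[f/x]` for the topmost variable `x`. -/
def subst0 (e f : Expr) : Expr :=
  substE (fun n => match n with | 0 => f | n + 1 => .var n) e

/-- The pair `⟨e₁, e₂⟩`. -/
def mkPair (e₁ e₂ : Expr) : Expr := .app (.app (.const .pair) e₁) e₂

/-- Evaluation contexts E ::= [] | E e | fst E | snd E | succ E. -/
inductive ECtx : Type
  | hole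
  | app (E : ECtx) (e : Expr)
  | fst (E : ECtx)
  | snd (E : ECtx)
  | succ (E : ECtx)

/-- Plugging an expression into an evaluation context. -/
def ECtx.plug : ECtx → Expr → Expr
  | .hole, e => e
  | .app E f, e => .app (E.plug e) f
  | .fst E, e => .app (.const .cfst) (E.plug e)
  | .snd E, e => .app (.const .csnd) (E.plug e)
  | .succ E, e => .app (.const .succ) (E.plug e)

/-- Head reduction rules. -/
inductive HeadRed : Expr → Expr → Prop
  | beta (e f) : HeadRed (.app (.lam e) f) (subst0 e f)
  | fst (e₁ e₂) : HeadRed (.app (.const .cfst) (mkPair e₁ e₂)) e₁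
  | snd (e₁ e₂) : HeadRed (.app (.const .csnd) (mkPair e₁ e₂)) e₂

/-- Weak head (call-by-name) reduction: head rules closed under evaluation contexts. -/
def Red (a b : Expr) : Prop :=
  ∃ (E : ECtx) (e f : Expr), HeadRed e f ∧ a = E.plug e ∧ b = E.plug f

/-- Many-step reduction. -/
def RedStar : Expr → Expr → Prop := Relation.ReflTransGen Red

/-- (Weak head) normal forms. -/
def NormalForm (e : Expr) : Prop := ∀ f, ¬ Red e f

/-- Typing contexts: finite maps from (de Bruijn) variables to types. -/
def Ctx : Type := ℕ → Option PseudoType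

/-- Extending a typing context with a type for the topmost variable. -/
def Ctx.cons (t : PseudoType) (Γ : Ctx) : Ctx :=
  fun n => match n with | 0 => some t | n + 1 => Γ n

/-- The type assignment κ for constants. -/
inductive KappaTy : Const → PseudoType → Prop
  | pair {t s} : IsType t → IsType s →
      KappaTy .pair (tarrow t (tarrow s (tprod t s)))
  | fst {t s} : IsType t → IsType s →
      KappaTy .cfst (tarrow (tprod t s) t)
  | snd {t s} : IsType t → IsType s →
      KappaTy .csnd (tarrow (tprod t s) s)
  | zero : KappaTy .zero tnat
  | succ : KappaTy .succ (tarrow tnat tnat)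

/-- The type assignment system λ•→. -/
inductive Types : Ctx → Expr → PseudoType → Prop
  | ax {Γ x t} : Γ x = some t → IsType t → Types Γ (.var x) t
  | const {Γ k t} : KappaTy k t → Types Γ (.const k) t
  | bulletI {Γ e t} : Types Γ e t → Types Γ e (tbullet t)
  | arrowI {Γ e n t s} :
      Types (Ctx.cons (tbulletN n t) Γ) e (tbulletN n s) →
      Types Γ (.lam e) (tbulletN n (tarrow t s))
  | arrowE {Γ e₁ e₂ n t s} :
      Types Γ e₁ (tbulletN n (tarrow t s)) → Types Γ e₂ (tbulletN n t) →
      Types Γ (.app e₁ e₂) (tbulletN n s)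


/-
Each inversion is an induction on the derivation, in which `(•I)` is the only rule that does not
fix the shape of the term; it raises the exponent `n` by one. For an abstraction this means
retyping the body under the delayed hypothesis `x : •ⁿ⁺¹t₁`, which is the delay lemma: from
`Γ ⊢ e : t` we get `Γ' ⊢ e : •t` whenever `Γ'` bullets some entries of `Γ`. Its variable case
needs that `•` preserves regularity and guardedness.
-/

lemma tbulletN_succ (n : ℕ) (t : PseudoType) :
    tbulletN (n + 1) t = tbullet (tbulletN n t) :=
  Function.iterate_succ_apply' tbullet n t

lemma child_tbullet_iff {s u : PseudoType} : Child (tbullet s) u ↔ u = s := by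
  simp only [Child, tbullet]
  exact ⟨fun ⟨_, hb⟩ => hb.symm, fun hu => ⟨(), hu.symm⟩⟩

lemma headIsBullet_tbullet (s : PseudoType) : headIsBullet (tbullet s) :=
  congrArg Sigma.fst (PFunctor.M.dest_mk (F := TyP) ⟨TyHead.bullet, fun _ => s⟩)

lemma regular_tbullet {s : PseudoType} (hs : Regular s) : Regular (tbullet s) := by
  refine (hs.insert (tbullet s)).subset fun u hu => ?_
  rcases Relation.ReflTransGen.cases_head hu with rfl | ⟨c, hc, hcu⟩
  · exact Set.mem_insert _ _
  · rw [child_tbullet_iff.mp hc] at hcu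
    exact Set.mem_insert_of_mem _ hcu

lemma guarded_tbullet {s : PseudoType} (hs : Guarded s) : Guarded (tbullet s) := by
  intro f hf0 hchild N
  cases N with
  | zero => exact ⟨0, le_rfl, hf0 ▸ headIsBullet_tbullet s⟩
  | succ N =>
    have hf1 : f 1 = s := child_tbullet_iff.mp (hf0 ▸ hchild 0)
    obtain ⟨n, hn, hb⟩ := hs (fun n => f (n + 1)) hf1 (fun n => hchild (n + 1)) N
    exact ⟨n + 1, Nat.succ_le_succ hn, hb⟩

lemma isType_tbullet {s : PseudoType} (hs : IsType s) : IsType (tbullet s) :=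
  ⟨regular_tbullet hs.1, guarded_tbullet hs.2⟩

def Delays (Γ Γ' : Ctx) : Prop :=
  ∀ y, Γ' y = Γ y ∨ ∃ u, Γ y = some u ∧ Γ' y = some (tbullet u)

lemma Delays.cons {Γ Γ' : Ctx} (h : Delays Γ Γ') (t : PseudoType) :
    Delays (Ctx.cons t Γ) (Ctx.cons (tbullet t) Γ') := by
  rintro (_ | y)
  · exact Or.inr ⟨t, rfl, rfl⟩
  · exact h y

lemma delays_cons_tbullet (Γ : Ctx) (t : PseudoType) :
    Delays (Ctx.cons t Γ) (Ctx.cons (tbullet t) Γ) := by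
  rintro (_ | y)
  · exact Or.inr ⟨t, rfl, rfl⟩
  · exact Or.inl rfl

namespace Types

lemma delay {Γ Γ' : Ctx} {e : Expr} {t : PseudoType} (h : Types Γ e t) (hΓ : Delays Γ Γ') :
    Types Γ' e (tbullet t) := by
  induction h generalizing Γ' with
  | @ax Γ x t hx ht =>
    rcases hΓ x with hsame | ⟨u, hu, hu'⟩
    · exact (ax (hsame.trans hx) ht).bulletI
    · obtain rfl := Option.some.inj (hu.symm.trans hx)
      exact ax hu' (isType_tbullet ht)
  | const hk => exact (const hk).bulletI
  | bulletI _ ih => exact (ih hΓ).bulletI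
  | @arrowI Γ e n t s _ ih =>
    have hbody := ih (hΓ.cons (tbulletN n t))
    rw [← tbulletN_succ, ← tbulletN_succ] at hbody
    simpa only [tbulletN_succ] using arrowI hbody
  | @arrowE Γ e₁ e₂ n t s _ _ ih₁ ih₂ =>
    have hfun := ih₁ hΓ
    have harg := ih₂ hΓ
    rw [← tbulletN_succ] at hfun harg
    simpa only [tbulletN_succ] using arrowE hfun harg

lemma delay_cons {Γ : Ctx} {e : Expr} {n : ℕ} {t₁ t₂ : PseudoType}
    (h : Types (Ctx.cons (tbulletN n t₁) Γ) e (tbulletN n t₂)) :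
    Types (Ctx.cons (tbulletN (n + 1) t₁) Γ) e (tbulletN (n + 1) t₂) := by
  rw [tbulletN_succ, tbulletN_succ]
  exact h.delay (delays_cons_tbullet Γ _)

lemma const_inv {Γ : Ctx} {k : Const} {t : PseudoType} (h : Types Γ (.const k) t) :
    ∃ n t', t = tbulletN n t' ∧ KappaTy k t' := by
  generalize he : Expr.const k = e at h
  induction h with
  | const hk => cases he; exact ⟨0, _, rfl, hk⟩
  | bulletI _ ih =>
    obtain ⟨n, t', rfl, hk⟩ := ih he
    exact ⟨n + 1, t', (tbulletN_succ n t').symm, hk⟩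
  | _ => cases he

lemma var_inv {Γ : Ctx} {x : ℕ} {t : PseudoType} (h : Types Γ (.var x) t) :
    ∃ n t', t = tbulletN n t' ∧ Γ x = some t' := by
  generalize he : Expr.var x = e at h
  induction h with
  | ax hx _ => cases he; exact ⟨0, _, rfl, hx⟩
  | bulletI _ ih =>
    obtain ⟨n, t', rfl, hx⟩ := ih he
    exact ⟨n + 1, t', (tbulletN_succ n t').symm, hx⟩
  | _ => cases he

lemma lam_inv {Γ : Ctx} {e : Expr} {t : PseudoType} (h : Types Γ (.lam e) t) :
    ∃ n t₁ t₂, t = tbulletN n (tarrow t₁ t₂) ∧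
      Types (Ctx.cons (tbulletN n t₁) Γ) e (tbulletN n t₂) := by
  generalize he : Expr.lam e = e' at h
  induction h with
  | arrowI hbody => cases he; exact ⟨_, _, _, rfl, hbody⟩
  | bulletI _ ih =>
    obtain ⟨n, t₁, t₂, rfl, hbody⟩ := ih he
    exact ⟨n + 1, t₁, t₂, (tbulletN_succ n _).symm, hbody.delay_cons⟩
  | _ => cases he

lemma app_inv {Γ : Ctx} {e₁ e₂ : Expr} {t : PseudoType} (h : Types Γ (.app e₁ e₂) t) :
    ∃ n t₁ t₂, t = tbulletN n t₂ ∧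
      Types Γ e₂ (tbulletN n t₁) ∧ Types Γ e₁ (tbulletN n (tarrow t₁ t₂)) := by
  generalize he : Expr.app e₁ e₂ = e' at h
  induction h with
  | arrowE hfun harg => cases he; exact ⟨_, _, _, rfl, harg, hfun⟩
  | bulletI _ ih =>
    obtain ⟨n, t₁, t₂, rfl, harg, hfun⟩ := ih he
    refine ⟨n + 1, t₁, t₂, (tbulletN_succ n _).symm, ?_, ?_⟩ <;>
      rw [tbulletN_succ] <;> exact bulletI ‹_›
  | _ => cases he

end Types

/-- Inversion. -/
theorem inversion :
    (∀ (Γ : Ctx) (k : Const) (t : PseudoType), Types Γ (.const k) t →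
      ∃ n t', t = tbulletN n t' ∧ KappaTy k t') ∧
    (∀ (Γ : Ctx) (x : ℕ) (t : PseudoType), Types Γ (.var x) t →
      ∃ n t', t = tbulletN n t' ∧ Γ x = some t') ∧
    (∀ (Γ : Ctx) (e : Expr) (t : PseudoType), Types Γ (.lam e) t →
      ∃ n t₁ t₂, t = tbulletN n (tarrow t₁ t₂) ∧
        Types (Ctx.cons (tbulletN n t₁) Γ) e (tbulletN n t₂)) ∧
    (∀ (Γ : Ctx) (e₁ e₂ : Expr) (t : PseudoType), Types Γ (.app e₁ e₂) t →
      ∃ n t₁ t₂, t = tbulletN n t₂ ∧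
        Types Γ e₂ (tbulletN n t₁) ∧ Types Γ e₁ (tbulletN n (tarrow t₁ t₂))) :=
  ⟨fun _ _ _ => Types.const_inv, fun _ _ _ => Types.var_inv,
    fun _ _ _ => Types.lam_inv, fun _ _ _ _ => Types.app_inv⟩

end LambdaBullet
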